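/- arXiv:1907.07331 — 4 statements merged into one kernel-verified Lean document; each statement's English description precedes it below -/
import Mathlib

section
/- If (X,Y) is IB_{β₁}-learnable, then for any β₂ > β₁, (X,Y) is IB_{β₂}-learnable. Consequently the set of β for which (X,Y) is IB_β-learnable is an interval of the form (β₀, +∞) for some threshold β₀ (possibly empty). -/
open Filter Asymptotics
open scoped BigOperators Topology

/-- A joint probability distribution `p(x,y)` on finite types `X` and `Y`. -/
structure JointDist (X Y : Type) [Fintype X] [Fintype Y] where
  p : X → Y → ℝ
  nonneg : ∀ x y, 0 ≤ p x y
  sum_one : ∑ x, ∑ y, p x y = 1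

variable {X Y Z : Type} [Fintype X] [Fintype Y] [Fintype Z]

/-- The marginal distribution `p(x)` of `X`. -/
def JointDist.pX (P : JointDist X Y) (x : X) : ℝ := ∑ y, P.p x y

/-- The marginal distribution `p(y)` of `Y`. -/
def JointDist.pY (P : JointDist X Y) (y : Y) : ℝ := ∑ x, P.p x y

/-- An encoder: a conditional distribution `p(z|x)` specifying a representation `Z` of `X`;
together with `p(x,y)` it determines the Markov chain `Z ← X ↔ Y`. -/
structure Encoder (X Z : Type) [Fintype X] [Fintype Z] where
  c : X → Z → ℝ
  nonneg : ∀ x z, 0 ≤ c x z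
  sum_one : ∀ x, ∑ z, c x z = 1

/-- The mutual information `I(X;Z)` of the representation given by encoder `e`,
where `p(x,z) = p(x) p(z|x)` and `p(z) = ∑ x, p(x) p(z|x)`. -/
noncomputable def IXZ (P : JointDist X Y) (e : Encoder X Z) : ℝ :=
  ∑ x, ∑ z, P.pX x * e.c x z *
    Real.log (P.pX x * e.c x z / (P.pX x * ∑ x', P.pX x' * e.c x' z))

/-- The mutual information `I(Y;Z)`, using the Markov chain `Z ← X ↔ Y`,
i.e. `p(y,z) = ∑ x, p(x,y) p(z|x)`. -/
noncomputable def IYZ (P : JointDist X Y) (e : Encoder X Z) : ℝ :=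
  ∑ y, ∑ z, (∑ x, P.p x y * e.c x z) *
    Real.log ((∑ x, P.p x y * e.c x z) / (P.pY y * ∑ x, P.pX x * e.c x z))

/-- The Information Bottleneck objective `IB_β(X,Y;Z) = I(X;Z) − β·I(Y;Z)`. -/
noncomputable def IB (P : JointDist X Y) (β : ℝ) (e : Encoder X Z) : ℝ :=
  IXZ P e - β * IYZ P e

/-- `(X,Y)` is `IB_β`-learnable if some representation `Z` (given by some encoder `p₁(z|x)`)
achieves `IB_β(X,Y;Z) < 0`, where `0` is the value attained by the trivial representation
`p(z|x) = p(z)`. -/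
def IBLearnable (P : JointDist X Y) (β : ℝ) : Prop :=
  ∃ (n : ℕ) (e : Encoder X (Fin n)), IB P β e < 0

lemma aux_term (a b : ℝ) (ha : 0 ≤ a) (hb : 0 ≤ b) (h : b = 0 → a = 0) :
    a - b ≤ a * Real.log (a / b) := by
  rcases eq_or_lt_of_le ha with h0 | ha'
  · simp [← h0]; linarith
  rcases eq_or_lt_of_le hb with hb0 | hb'
  · exact absurd (h hb0.symm) (by linarith)
  · have hl := Real.log_le_sub_one_of_pos (show (0:ℝ) < b / a from div_pos hb' ha')
    have hlog : Real.log (a / b) = - Real.log (b / a) := by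
      rw [← Real.log_inv]; congr 1; field_simp
    rw [hlog]
    have h2 : b / a - 1 = (b - a) / a := by field_simp
    rw [h2] at hl
    have h3 : Real.log (b / a) * a ≤ (b - a) := by
      calc Real.log (b/a) * a ≤ (b - a)/a * a := by nlinarith
        _ = b - a := by field_simp
    nlinarith

lemma kl_nonneg {ι : Type*} [Fintype ι] (a b : ι → ℝ) (ha : ∀ i, 0 ≤ a i)
    (hb : ∀ i, 0 ≤ b i) (hab : ∀ i, b i = 0 → a i = 0)
    (hsum : ∑ i, b i ≤ ∑ i, a i) :
    0 ≤ ∑ i, a i * Real.log (a i / b i) := by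
  have h1 : ∑ i, (a i - b i) ≤ ∑ i, a i * Real.log (a i / b i) :=
    Finset.sum_le_sum fun i _ => aux_term (a i) (b i) (ha i) (hb i) (hab i)
  rw [Finset.sum_sub_distrib] at h1
  linarith

lemma pX_nonneg (P : JointDist X Y) (x : X) : 0 ≤ P.pX x :=
  Finset.sum_nonneg fun y _ => P.nonneg x y

lemma pY_nonneg (P : JointDist X Y) (y : Y) : 0 ≤ P.pY y :=
  Finset.sum_nonneg fun x _ => P.nonneg x y

lemma p_le_pX (P : JointDist X Y) (x : X) (y : Y) : P.p x y ≤ P.pX x :=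
  Finset.single_le_sum (fun y' _ => P.nonneg x y') (Finset.mem_univ y)

lemma sum_pX (P : JointDist X Y) : ∑ x, P.pX x = 1 := P.sum_one

lemma sum_pY (P : JointDist X Y) : ∑ y, P.pY y = 1 := by
  rw [← P.sum_one]; exact Finset.sum_comm

lemma IXZ_nonneg (P : JointDist X Y) (e : Encoder X Z) : 0 ≤ IXZ P e := by
  have h := kl_nonneg (fun q : X × Z => P.pX q.1 * e.c q.1 q.2)
      (fun q : X × Z => P.pX q.1 * ∑ x', P.pX x' * e.c x' q.2)
      ?_ ?_ ?_ ?_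
  · rw [IXZ]; rw [Fintype.sum_prod_type] at h; exact h
  · exact fun q => mul_nonneg (pX_nonneg P q.1) (e.nonneg q.1 q.2)
  · exact fun q => mul_nonneg (pX_nonneg P q.1)
      (Finset.sum_nonneg fun x' _ => mul_nonneg (pX_nonneg P x') (e.nonneg x' q.2))
  · rintro ⟨x, z⟩ h
    rcases mul_eq_zero.1 h with h1 | h1
    · simp [h1]
    · have := (Finset.sum_eq_zero_iff_of_nonneg
        (fun x' _ => mul_nonneg (pX_nonneg P x') (e.nonneg x' z))).1 h1 x (Finset.mem_univ x)
      simpa using this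
  · rw [Fintype.sum_prod_type, Fintype.sum_prod_type]
    have h1 : ∑ x, ∑ z, P.pX x * e.c x z = 1 := by
      have : ∀ x, ∑ z : Z, P.pX x * e.c x z = P.pX x := by
        intro x; rw [← Finset.mul_sum, e.sum_one x, mul_one]
      simp only [this, sum_pX]
    have h2 : ∑ x, ∑ z : Z, P.pX x * ∑ x', P.pX x' * e.c x' z = 1 := by
      have : ∀ x, ∑ z : Z, P.pX x * ∑ x', P.pX x' * e.c x' z
          = P.pX x * ∑ z : Z, ∑ x', P.pX x' * e.c x' z := by
        intro x; rw [Finset.mul_sum]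
      simp only [this, ← Finset.sum_mul]
      rw [sum_pX, one_mul, Finset.sum_comm]
      have : ∀ x', ∑ z : Z, P.pX x' * e.c x' z = P.pX x' := by
        intro x'; rw [← Finset.mul_sum, e.sum_one x', mul_one]
      simp only [this, sum_pX]
    rw [h1, h2]

lemma IYZ_nonneg (P : JointDist X Y) (e : Encoder X Z) : 0 ≤ IYZ P e := by
  have h := kl_nonneg (fun q : Y × Z => ∑ x, P.p x q.1 * e.c x q.2)
      (fun q : Y × Z => P.pY q.1 * ∑ x, P.pX x * e.c x q.2)
      ?_ ?_ ?_ ?_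
  · rw [IYZ]; rw [Fintype.sum_prod_type] at h; exact h
  · exact fun q => Finset.sum_nonneg fun x _ =>
      mul_nonneg (P.nonneg x q.1) (e.nonneg x q.2)
  · exact fun q => mul_nonneg (pY_nonneg P q.1)
      (Finset.sum_nonneg fun x _ => mul_nonneg (pX_nonneg P x) (e.nonneg x q.2))
  · rintro ⟨y, z⟩ h
    rcases mul_eq_zero.1 h with h1 | h1
    · have hp : ∀ x, P.p x y = 0 := fun x =>
        (Finset.sum_eq_zero_iff_of_nonneg (fun x' _ => P.nonneg x' y)).1 h1 x
          (Finset.mem_univ x)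
      simp [hp]
    · apply Finset.sum_eq_zero
      intro x _
      have hx : P.pX x * e.c x z = 0 :=
        (Finset.sum_eq_zero_iff_of_nonneg
          (fun x' _ => mul_nonneg (pX_nonneg P x') (e.nonneg x' z))).1 h1 x
          (Finset.mem_univ x)
      have h4 : P.p x y * e.c x z ≤ P.pX x * e.c x z :=
        mul_le_mul_of_nonneg_right (p_le_pX P x y) (e.nonneg x z)
      have h5 : 0 ≤ P.p x y * e.c x z := mul_nonneg (P.nonneg x y) (e.nonneg x z)
      linarith [hx ▸ h4]
  · rw [Fintype.sum_prod_type, Fintype.sum_prod_type]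
    have h1 : ∑ y, ∑ z : Z, ∑ x, P.p x y * e.c x z = 1 := by
      have : ∀ y, ∑ z : Z, ∑ x, P.p x y * e.c x z = P.pY y := by
        intro y
        rw [Finset.sum_comm]
        have : ∀ x, ∑ z : Z, P.p x y * e.c x z = P.p x y := by
          intro x; rw [← Finset.mul_sum, e.sum_one x, mul_one]
        simp only [this]; rfl
      simp only [this, sum_pY]
    have h2 : ∑ y, ∑ z : Z, P.pY y * ∑ x, P.pX x * e.c x z = 1 := by
      have : ∀ y, ∑ z : Z, P.pY y * ∑ x, P.pX x * e.c x z
          = P.pY y * ∑ z : Z, ∑ x, P.pX x * e.c x z := fun y => (Finset.mul_sum _ _ _).symm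
      simp only [this, ← Finset.sum_mul]
      rw [sum_pY, one_mul, Finset.sum_comm]
      have : ∀ x, ∑ z : Z, P.pX x * e.c x z = P.pX x := by
        intro x; rw [← Finset.mul_sum, e.sum_one x, mul_one]
      simp only [this, sum_pX]
    rw [h1, h2]


lemma IBLearnable_mono (P : JointDist X Y) {β₁ β₂ : ℝ}
    (h : IBLearnable P β₁) (hlt : β₁ < β₂) : IBLearnable P β₂ := by
  obtain ⟨n, e, he⟩ := h
  refine ⟨n, e, ?_⟩
  have h1 := IYZ_nonneg P e
  rw [IB] at he ⊢
  nlinarith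

lemma IBLearnable_below (P : JointDist X Y) {β : ℝ} (h : IBLearnable P β) :
    ∃ β' : ℝ, β' < β ∧ IBLearnable P β' := by
  obtain ⟨n, e, he⟩ := h
  rw [IB] at he
  have hx := IXZ_nonneg P e
  have hy := IYZ_nonneg P e
  have hy' : 0 < IYZ P e := by
    rcases eq_or_lt_of_le hy with h0 | h0
    · exfalso; rw [← h0] at he; linarith
    · exact h0
  have hrat : IXZ P e / IYZ P e < β := by
    rw [div_lt_iff₀ hy']; nlinarith
  refine ⟨(IXZ P e / IYZ P e + β) / 2, by linarith, n, e, ?_⟩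
  rw [IB]
  have : IXZ P e / IYZ P e < (IXZ P e / IYZ P e + β) / 2 := by linarith
  rw [div_lt_iff₀ hy'] at this
  linarith

/-- If `(X,Y)` is `IB_{β₁}`-learnable then it is `IB_{β₂}`-learnable for every
`β₂ > β₁`; consequently the set of `β` for which `(X,Y)` is `IB_β`-learnable is an open interval
of the form `(β₀, +∞)` for some threshold `β₀` (an extended real, so the interval may be empty). -/
theorem IBLearnable_mono_and_interval (P : JointDist X Y) :
    (∀ β₁ β₂ : ℝ, IBLearnable P β₁ → β₁ < β₂ → IBLearnable P β₂) ∧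
      ∃ β₀ : EReal, {β : ℝ | IBLearnable P β} = {β : ℝ | β₀ < (β : EReal)} := by
  refine ⟨fun β₁ β₂ h hlt => IBLearnable_mono P h hlt, ?_⟩
  refine ⟨sInf ((fun β : ℝ => (β : EReal)) '' {β : ℝ | IBLearnable P β}), ?_⟩
  ext β
  simp only [Set.mem_setOf_eq]
  constructor
  · intro h
    obtain ⟨β', hβ', h'⟩ := IBLearnable_below P h
    calc sInf ((fun β : ℝ => (β : EReal)) '' {β : ℝ | IBLearnable P β})
        ≤ (β' : EReal) := sInf_le ⟨β', h', rfl⟩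
      _ < (β : EReal) := by exact_mod_cast hβ'
  · intro h
    rw [sInf_lt_iff] at h
    obtain ⟨a, ha, hab⟩ := h
    obtain ⟨β₁, hβ₁, rfl⟩ := ha
    exact IBLearnable_mono P hβ₁ (by simpa using hab)
end

section
/- The trivial representation p(z|x) = p(z) is a stationary solution of the IB objective: for every admissible perturbation h(z|x) with ∫ h(z|x) dz = 0 for all x, the first-order variation δIB_β[p(z|x)] vanishes at p(z|x) = p(z). -/
open Filter Asymptotics
open scoped BigOperators Topology

variable {X Y Z : Type} [Fintype X] [Fintype Y] [Fintype Z]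

/-- The IB objective `I(X;Z) − β·I(Y;Z)` written as a formula of an arbitrary (not necessarily
normalized) encoder kernel `c : X → Z → ℝ`, with `p(z) = ∑ x, p(x) c(x,z)` and
`p(y,z) = ∑ x, p(x,y) c(x,z)`. -/
noncomputable def IBraw (P : JointDist X Y) (β : ℝ) (c : X → Z → ℝ) : ℝ :=
  (∑ x, ∑ z, P.pX x * c x z *
      Real.log (P.pX x * c x z / (P.pX x * ∑ x', P.pX x' * c x' z)))
    - β * ∑ y, ∑ z, (∑ x, P.p x y * c x z) *
        Real.log ((∑ x, P.p x y * c x z) / (P.pY y * ∑ x, P.pX x * c x z))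

lemma ib_aux (a b u v : ℝ) (ha : 0 < a) (hb : 0 < b) :
    HasDerivAt (fun ε : ℝ => (a * b + ε * u) *
      Real.log ((a * b + ε * u) / (b * (a + ε * v)))) (u - b * v) 0 := by
  have hA : HasDerivAt (fun ε : ℝ => a * b + ε * u) u 0 := by
    simpa using ((hasDerivAt_id (0:ℝ)).mul_const u).const_add (a * b)
  have hB : HasDerivAt (fun ε : ℝ => b * (a + ε * v)) (b * v) 0 := by
    simpa using (((hasDerivAt_id (0:ℝ)).mul_const v).const_add a).const_mul b
  have hd0 : b * (a + 0 * v) ≠ 0 := by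
    rw [zero_mul, add_zero]; exact (mul_pos hb ha).ne'
  have hr := hA.fun_div hB hd0
  have hrat0 : (a * b + 0 * u) / (b * (a + 0 * v)) = 1 := by
    rw [zero_mul, zero_mul, add_zero, add_zero, mul_comm a b]
    exact div_self (mul_pos hb ha).ne'
  have hlog := hr.log (by rw [hrat0]; exact one_ne_zero)
  have hmul := hA.fun_mul hlog
  refine hmul.congr_deriv ?_
  rw [hrat0, Real.log_one]
  simp only [zero_mul, add_zero, mul_zero, zero_add, div_one]
  field_simp


/-- The trivial representation `p(z|x) = p(z)` is a stationary solution of the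
IB objective: for every admissible perturbation `h(z|x)` with `∑ z, h(z|x) = 0` for all `x`, the
first-order variation of `ε ↦ IB_β[p(z) + ε·h(z|x)]` vanishes at `ε = 0`, i.e. the derivative of
the perturbed IB objective at the trivial representation is `0`. -/
theorem trivial_representation_stationary (P : JointDist X Y) (β : ℝ)
    (q : Z → ℝ) (hq : ∀ z, 0 < q z) (hq1 : ∑ z, q z = 1)
    (h : X → Z → ℝ) (hh : ∀ x, ∑ z, h x z = 0) :
    HasDerivAt (fun ε : ℝ => IBraw P β fun x z => q z + ε * h x z) 0 0 := by
  classical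
  set Hz : Z → ℝ := fun z => ∑ x, P.pX x * h x z with hHzdef
  set K : Y → Z → ℝ := fun y z => ∑ x, P.p x y * h x z with hKdef
  have hpX0 : ∀ x, 0 ≤ P.pX x := fun x => Finset.sum_nonneg fun y _ => P.nonneg x y
  have hpY0 : ∀ y, 0 ≤ P.pY y := fun y => Finset.sum_nonneg fun x _ => P.nonneg x y
  have hpX1 : ∑ x, P.pX x = 1 := by simpa [JointDist.pX] using P.sum_one
  have hS : ∀ (ε : ℝ) (z : Z), ∑ x', P.pX x' * (q z + ε * h x' z) = q z + ε * Hz z := by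
    intro ε z
    have : ∑ x', P.pX x' * (q z + ε * h x' z)
        = (∑ x', P.pX x') * q z + ε * ∑ x', P.pX x' * h x' z := by
      rw [Finset.sum_mul, Finset.mul_sum, ← Finset.sum_add_distrib]
      exact Finset.sum_congr rfl fun x _ => by ring
    rw [this, hpX1, one_mul, hHzdef]
  have hA : ∀ (ε : ℝ) (y : Y) (z : Z),
      ∑ x, P.p x y * (q z + ε * h x z) = q z * P.pY y + ε * K y z := by
    intro ε y z
    have : ∑ x, P.p x y * (q z + ε * h x z)
        = (∑ x, P.p x y) * q z + ε * ∑ x, P.p x y * h x z := by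
      rw [Finset.sum_mul, Finset.mul_sum, ← Finset.sum_add_distrib]
      exact Finset.sum_congr rfl fun x _ => by ring
    rw [this, hKdef]
    simp [JointDist.pY, mul_comm]
  have hzHz : ∑ z, Hz z = 0 := by
    rw [hHzdef]
    rw [Finset.sum_comm]
    exact Finset.sum_eq_zero fun x _ => by rw [← Finset.mul_sum, hh, mul_zero]
  have hzK : ∀ y, ∑ z, K y z = 0 := by
    intro y
    rw [hKdef]
    rw [Finset.sum_comm]
    exact Finset.sum_eq_zero fun x _ => by rw [← Finset.mul_sum, hh, mul_zero]
  have T1 : ∀ x z, HasDerivAt (fun ε : ℝ => P.pX x * (q z + ε * h x z) *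
      Real.log (P.pX x * (q z + ε * h x z) / (P.pX x * (q z + ε * Hz z))))
      (P.pX x * (h x z - Hz z)) 0 := by
    intro x z
    rcases eq_or_lt_of_le (hpX0 x) with hx | hx
    · simpa [← hx] using hasDerivAt_const (0:ℝ) (0:ℝ)
    · have h1 := (ib_aux (q z) 1 (h x z) (Hz z) (hq z) one_pos).const_mul (P.pX x)
      simp only [mul_one, one_mul] at h1
      simp only [mul_div_mul_left _ _ (ne_of_gt hx), mul_assoc]
      exact h1
  have T2 : ∀ y z, HasDerivAt (fun ε : ℝ => (q z * P.pY y + ε * K y z) *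
      Real.log ((q z * P.pY y + ε * K y z) / (P.pY y * (q z + ε * Hz z))))
      (K y z - P.pY y * Hz z) 0 := by
    intro y z
    rcases eq_or_lt_of_le (hpY0 y) with hy | hy
    · have hp : ∀ x, P.p x y = 0 := by
        intro x
        have := (Finset.sum_eq_zero_iff_of_nonneg
          (fun x _ => P.nonneg x y)).mp hy.symm
        exact this x (Finset.mem_univ x)
      have hK0 : K y z = 0 := by simp [hKdef, hp]
      simpa [← hy, hK0] using hasDerivAt_const (0:ℝ) (0:ℝ)
    · exact ib_aux (q z) (P.pY y) (K y z) (Hz z) (hq z) hy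
  have HD : HasDerivAt (fun ε : ℝ =>
      (∑ x, ∑ z, P.pX x * (q z + ε * h x z) *
        Real.log (P.pX x * (q z + ε * h x z) / (P.pX x * (q z + ε * Hz z))))
      - β * ∑ y, ∑ z, (q z * P.pY y + ε * K y z) *
          Real.log ((q z * P.pY y + ε * K y z) / (P.pY y * (q z + ε * Hz z))))
      ((∑ x, ∑ z, P.pX x * (h x z - Hz z))
        - β * ∑ y, ∑ z, (K y z - P.pY y * Hz z)) 0 :=
    (HasDerivAt.fun_sum fun x _ => HasDerivAt.fun_sum fun z _ => T1 x z).sub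
      ((HasDerivAt.fun_sum fun y _ => HasDerivAt.fun_sum fun z _ => T2 y z).const_mul β)
  have hval : (∑ x, ∑ z, P.pX x * (h x z - Hz z))
      - β * ∑ y, ∑ z, (K y z - P.pY y * Hz z) = 0 := by
    have h1 : ∀ x, ∑ z, P.pX x * (h x z - Hz z) = 0 := fun x => by
      rw [← Finset.mul_sum, Finset.sum_sub_distrib, hh x, hzHz, sub_zero, mul_zero]
    have h2 : ∀ y, ∑ z, (K y z - P.pY y * Hz z) = 0 := fun y => by
      rw [Finset.sum_sub_distrib, hzK y, ← Finset.mul_sum, hzHz, mul_zero, sub_zero]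
    rw [Finset.sum_eq_zero fun x _ => h1 x, Finset.sum_eq_zero fun y _ => h2 y]
    ring
  have hfun : (fun ε : ℝ => IBraw P β fun x z => q z + ε * h x z) =
      (fun ε : ℝ =>
      (∑ x, ∑ z, P.pX x * (q z + ε * h x z) *
        Real.log (P.pX x * (q z + ε * h x z) / (P.pX x * (q z + ε * Hz z))))
      - β * ∑ y, ∑ z, (q z * P.pY y + ε * K y z) *
          Real.log ((q z * P.pY y + ε * K y z) / (P.pY y * (q z + ε * Hz z)))) := by
    funext ε
    simp only [IBraw, hS, hA]
  rw [hval] at HD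
  rwa [hfun]
end

section
/- (First- and second-order variations of the IB objective.) For a perturbation h(z|x) of the encoder p(z|x), the first-order variation is δIB_β[p(z|x)] = ∫ dx dz p(x) h(z|x) log(p(z|x)/p(z)) − β ∫ dx dy dz p(x,y) h(z|x) log(p(z|y)/p(z)), and the second-order variation is δ²IB_β[p(z|x)] = (1/2)[ ∫ dx dz (p(x)²/p(x,z)) h(z|x)² − β ∫ dx dx' dy dz (p(x,y)p(x',y)/p(y,z)) h(z|x) h(z|x') + (β−1) ∫ dx dx' dz (p(x)p(x')/p(z)) h(z|x) h(z|x') ]. -/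
open Filter Asymptotics
open scoped BigOperators Topology

variable {X Y Z : Type} [Fintype X] [Fintype Y] [Fintype Z]

/-- The first-order variation `δIB_β[p(z|x)]` of the IB objective at the encoder `c` for a
perturbation `h(z|x)`:
`δIB_β = ∑ p(x) h(z|x) log(p(z|x)/p(z)) − β ∑ p(x,y) h(z|x) log(p(z|y)/p(z))`. -/
noncomputable def deltaIB (P : JointDist X Y) (β : ℝ) (c : X → Z → ℝ) (h : X → Z → ℝ) : ℝ :=
  (∑ x, ∑ z, P.pX x * h x z * Real.log (c x z / (∑ x', P.pX x' * c x' z)))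
    - β * ∑ x, ∑ y, ∑ z, P.p x y * h x z *
        Real.log (((∑ x', P.p x' y * c x' z) / P.pY y) / (∑ x', P.pX x' * c x' z))

/-- The second-order variation `δ²IB_β[p(z|x)]` of the IB objective at the encoder `c` for a
perturbation `h(z|x)`:
`δ²IB_β = (1/2)[ ∑ p(x)²/p(x,z) h(z|x)² − β ∑ p(x,y)p(x',y)/p(y,z) h(z|x)h(z|x')`
`+ (β−1) ∑ p(x)p(x')/p(z) h(z|x)h(z|x') ]`. -/
noncomputable def delta2IB (P : JointDist X Y) (β : ℝ) (c : X → Z → ℝ) (h : X → Z → ℝ) : ℝ :=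
  (1 / 2) * ((∑ x, ∑ z, (P.pX x) ^ 2 / (P.pX x * c x z) * (h x z) ^ 2)
    - β * (∑ x, ∑ x', ∑ y, ∑ z,
        P.p x y * P.p x' y / (∑ x'', P.p x'' y * c x'' z) * (h x z * h x' z))
    + (β - 1) * (∑ x, ∑ x', ∑ z,
        P.pX x * P.pX x' / (∑ x'', P.pX x'' * c x'' z) * (h x z * h x' z)))

/-!
With `φ t = t * log t`, the objective is a combination of `φ` at `p(z|x)`, `p(z)` and `p(y,z)`:
`IB_β = ∑ p(x) φ(p(z|x)) + (β - 1) ∑ φ(p(z)) - β ∑ φ(p(y,z)) + β ∑ p(y,z) log p(y)`.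
Along `p(z|x) + ε h(z|x)` all three arguments are affine in `ε`, so every term expands by
`φ(u + ε w) = φ(u) + ε w (log u + 1) + ε² w² / (2u) + O(ε³)`, which in turn comes from
`log (1 + t) = t - t² / 2 + O(t³)`. Collecting coefficients gives `δIB_β` and `δ²IB_β`; the
constants `+ 1` drop out of the first-order coefficient because `∑ z, h(z|x) = 0`.
-/

open Finset Real

def HasSecondOrderExpansion (f : ℝ → ℝ) (a b c : ℝ) : Prop :=
  (fun ε => f ε - (a + ε * b + ε ^ 2 * c)) =O[𝓝 0] fun ε => ε ^ 3

namespace HasSecondOrderExpansion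

variable {f g : ℝ → ℝ} {a b c a' b' c' : ℝ}

theorem congr (hf : HasSecondOrderExpansion f a b c) (hfg : f =ᶠ[𝓝 0] g) :
    HasSecondOrderExpansion g a b c :=
  hf.congr' (hfg.sub .rfl) .rfl

theorem add (hf : HasSecondOrderExpansion f a b c) (hg : HasSecondOrderExpansion g a' b' c') :
    HasSecondOrderExpansion (fun ε => f ε + g ε) (a + a') (b + b') (c + c') :=
  (IsBigO.add hf hg).congr_left fun ε => by ring

theorem sub (hf : HasSecondOrderExpansion f a b c) (hg : HasSecondOrderExpansion g a' b' c') :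
    HasSecondOrderExpansion (fun ε => f ε - g ε) (a - a') (b - b') (c - c') :=
  (IsBigO.sub hf hg).congr_left fun ε => by ring

theorem const_mul (hf : HasSecondOrderExpansion f a b c) (d : ℝ) :
    HasSecondOrderExpansion (fun ε => d * f ε) (d * a) (d * b) (d * c) :=
  (IsBigO.const_mul_left hf d).congr_left fun ε => by ring

theorem sum {ι : Type*} (s : Finset ι) {f : ι → ℝ → ℝ} {a b c : ι → ℝ}
    (hf : ∀ i ∈ s, HasSecondOrderExpansion (f i) (a i) (b i) (c i)) :
    HasSecondOrderExpansion (fun ε => ∑ i ∈ s, f i ε) (∑ i ∈ s, a i) (∑ i ∈ s, b i)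
      (∑ i ∈ s, c i) :=
  (IsBigO.fun_sum hf).congr_left fun ε => by
    simp only [sum_sub_distrib, sum_add_distrib, mul_sum]

theorem const_add (hf : HasSecondOrderExpansion f a b c) (d : ℝ) :
    HasSecondOrderExpansion (fun ε => d + f ε) (d + a) b c :=
  hf.congr_left fun ε => by ring

theorem affine_mul (hf : HasSecondOrderExpansion f a b c) (u w : ℝ) :
    HasSecondOrderExpansion (fun ε => (u + ε * w) * f ε) (u * a) (u * b + w * a)
      (u * c + w * b) := by
  have hbdd : (fun ε : ℝ => u + ε * w) =O[𝓝 0] fun _ => (1 : ℝ) :=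
    ((by fun_prop : Continuous fun ε : ℝ => u + ε * w).tendsto 0).isBigO_one ℝ
  have hcube : (fun ε : ℝ => w * c * ε ^ 3) =O[𝓝 0] fun ε => ε ^ 3 :=
    (isBigO_refl _ _).const_mul_left _
  exact (((IsBigO.mul hbdd hf).congr_right fun ε => one_mul _).add hcube).congr_left
    fun ε => by ring

end HasSecondOrderExpansion

theorem hasSecondOrderExpansion_affine (a b : ℝ) :
    HasSecondOrderExpansion (fun ε => a + ε * b) a b 0 :=
  (isBigO_zero _ _).congr_left fun ε => by ring

theorem Real.abs_log_one_add_sub_le {t : ℝ} (ht : |t| ≤ 1 / 2) :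
    |log (1 + t) - (t - t ^ 2 / 2)| ≤ 2 * |t| ^ 3 := by
  have hseries : |-t + t ^ 2 / 2 + log (1 + t)| ≤ |t| ^ 3 / (1 - |t|) := by
    have := abs_log_sub_add_sum_range_le (x := -t) (by rw [abs_neg]; linarith) 2
    norm_num [sum_range_succ] at this
    exact this
  calc |log (1 + t) - (t - t ^ 2 / 2)| = |-t + t ^ 2 / 2 + log (1 + t)| := by
        ring_nf
    _ ≤ |t| ^ 3 / (1 - |t|) := hseries
    _ ≤ 2 * |t| ^ 3 := by
        rw [div_le_iff₀ (by linarith)]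
        nlinarith [pow_nonneg (abs_nonneg t) 3]

theorem hasSecondOrderExpansion_log_one_add_mul (a : ℝ) :
    HasSecondOrderExpansion (fun ε => log (1 + ε * a)) 0 a (-a ^ 2 / 2) := by
  have hsmall : ∀ᶠ ε in 𝓝 (0 : ℝ), |ε * a| ≤ 1 / 2 := by
    have : Tendsto (fun ε : ℝ => |ε * a|) (𝓝 0) (𝓝 0) :=
      (by fun_prop : Continuous fun ε : ℝ => |ε * a|).tendsto' 0 0 (by simp)
    exact this.eventually_le_const (by norm_num)
  refine IsBigO.of_bound (2 * |a| ^ 3) ?_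
  filter_upwards [hsmall] with ε hε
  calc ‖log (1 + ε * a) - (0 + ε * a + ε ^ 2 * (-a ^ 2 / 2))‖
      = |log (1 + ε * a) - (ε * a - (ε * a) ^ 2 / 2)| := by
        rw [norm_eq_abs]; ring_nf
    _ ≤ 2 * |ε * a| ^ 3 := Real.abs_log_one_add_sub_le hε
    _ = 2 * |a| ^ 3 * ‖ε ^ 3‖ := by
        rw [norm_eq_abs, abs_mul, abs_pow]; ring

theorem eventually_pos_add_mul {u : ℝ} (hu : 0 < u) (w : ℝ) :
    ∀ᶠ ε in 𝓝 (0 : ℝ), 0 < u + ε * w :=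
  ((by fun_prop : Continuous fun ε : ℝ => u + ε * w).tendsto' 0 u (by simp)).eventually_const_lt
    hu

theorem hasSecondOrderExpansion_log_add_mul {u : ℝ} (hu : 0 < u) (w : ℝ) :
    HasSecondOrderExpansion (fun ε => log (u + ε * w)) (log u) (w / u)
      (-(w / u) ^ 2 / 2) := by
  refine ((hasSecondOrderExpansion_log_one_add_mul (w / u)).const_add (log u)).congr ?_
    |>.congr_left fun ε => by rw [add_zero]
  filter_upwards [eventually_pos_add_mul one_pos (w / u)] with ε hε
  rw [← log_mul hu.ne' hε.ne']
  congr 1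
  field_simp

theorem hasSecondOrderExpansion_mul_log {u : ℝ} (hu : 0 < u) (w : ℝ) :
    HasSecondOrderExpansion (fun ε => (u + ε * w) * log (u + ε * w)) (u * log u)
      (w * (log u + 1)) (w ^ 2 / (2 * u)) := by
  have h := (hasSecondOrderExpansion_log_add_mul hu w).affine_mul u w
  convert h using 1 <;> field_simp <;> ring

namespace JointDist

theorem nonempty_fst (P : JointDist X Y) : Nonempty X := by
  by_contra hX
  simpa [not_nonempty_iff.mp hX] using P.sum_one

theorem nonempty_snd (P : JointDist X Y) : Nonempty Y := by
  by_contra hY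
  simpa [not_nonempty_iff.mp hY] using P.sum_one

variable (P : JointDist X Y)

def pZ (c : X → Z → ℝ) (z : Z) : ℝ := ∑ x, P.pX x * c x z

def pYZ (c : X → Z → ℝ) (y : Y) (z : Z) : ℝ := ∑ x, P.p x y * c x z

omit [Fintype Z] in
theorem pZ_add_mul (c h : X → Z → ℝ) (ε : ℝ) (z : Z) :
    P.pZ (fun x z => c x z + ε * h x z) z = P.pZ c z + ε * P.pZ h z := by
  simp only [pZ, mul_add, sum_add_distrib, mul_sum, mul_left_comm]

omit [Fintype Z] in
theorem pYZ_add_mul (c h : X → Z → ℝ) (ε : ℝ) (y : Y) (z : Z) :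
    P.pYZ (fun x z => c x z + ε * h x z) y z = P.pYZ c y z + ε * P.pYZ h y z := by
  simp only [pYZ, mul_add, sum_add_distrib, mul_sum, mul_left_comm]

omit [Fintype Z] in
theorem sum_pYZ (c : X → Z → ℝ) (z : Z) : ∑ y, P.pYZ c y z = P.pZ c z := by
  simp only [pYZ, pZ, pX, sum_mul]
  exact sum_comm

theorem sum_mul_mul_eq_sum_pZ_mul (h : X → Z → ℝ) (F : Z → ℝ) :
    ∑ x, ∑ z, P.pX x * h x z * F z = ∑ z, P.pZ h z * F z := by
  simp only [pZ, sum_mul]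
  exact sum_comm

theorem sum_mul_mul_eq_sum_pYZ_mul (h : X → Z → ℝ) (F : Y → Z → ℝ) :
    ∑ x, ∑ y, ∑ z, P.p x y * h x z * F y z = ∑ y, ∑ z, P.pYZ h y z * F y z := by
  simp only [pYZ, sum_mul]
  rw [sum_comm]
  refine sum_congr rfl fun y _ => sum_comm

theorem sum_pZ_eq_zero {h : X → Z → ℝ} (hh : ∀ x, ∑ z, h x z = 0) :
    ∑ z, P.pZ h z = 0 := by
  simp only [pZ]
  rw [sum_comm]
  simp only [← mul_sum, hh, mul_zero, sum_const_zero]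

theorem sum_pYZ_eq_zero {h : X → Z → ℝ} (hh : ∀ x, ∑ z, h x z = 0) (y : Y) :
    ∑ z, P.pYZ h y z = 0 := by
  simp only [pYZ]
  rw [sum_comm]
  simp only [← mul_sum, hh, mul_zero, sum_const_zero]

variable {P}

theorem pX_pos (hP : ∀ x y, 0 < P.p x y) (x : X) : 0 < P.pX x :=
  have := P.nonempty_snd
  sum_pos (fun y _ => hP x y) univ_nonempty

theorem pY_pos (hP : ∀ x y, 0 < P.p x y) (y : Y) : 0 < P.pY y :=
  have := P.nonempty_fst
  sum_pos (fun x _ => hP x y) univ_nonempty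

omit [Fintype Z] in
theorem pZ_pos (hP : ∀ x y, 0 < P.p x y) {c : X → Z → ℝ} (hc : ∀ x z, 0 < c x z) (z : Z) :
    0 < P.pZ c z :=
  have := P.nonempty_fst
  sum_pos (fun x _ => mul_pos (pX_pos hP x) (hc x z)) univ_nonempty

omit [Fintype Z] in
theorem pYZ_pos (hP : ∀ x y, 0 < P.p x y) {c : X → Z → ℝ} (hc : ∀ x z, 0 < c x z) (y : Y)
    (z : Z) : 0 < P.pYZ c y z :=
  have := P.nonempty_fst
  sum_pos (fun x _ => mul_pos (hP x y) (hc x z)) univ_nonempty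

end JointDist

open JointDist

theorem IBraw_eq_sum_mul_log {P : JointDist X Y} (hP : ∀ x y, 0 < P.p x y) (β : ℝ)
    {c : X → Z → ℝ} (hc : ∀ x z, 0 < c x z) :
    IBraw P β c = ∑ x, ∑ z, P.pX x * (c x z * log (c x z))
      + (β - 1) * ∑ z, P.pZ c z * log (P.pZ c z)
      - β * ∑ y, ∑ z, P.pYZ c y z * log (P.pYZ c y z)
      + β * ∑ y, ∑ z, log (P.pY y) * P.pYZ c y z := by
  change (∑ x, ∑ z, P.pX x * c x z * log (P.pX x * c x z / (P.pX x * P.pZ c z)))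
    - β * ∑ y, ∑ z, P.pYZ c y z * log (P.pYZ c y z / (P.pY y * P.pZ c z)) = _
  have hX : ∀ x z, P.pX x * c x z * log (P.pX x * c x z / (P.pX x * P.pZ c z))
      = P.pX x * (c x z * log (c x z)) - P.pX x * c x z * log (P.pZ c z) := by
    intro x z
    rw [mul_div_mul_left _ _ (pX_pos hP x).ne', log_div (hc x z).ne' (pZ_pos hP hc z).ne']
    ring
  have hY : ∀ y z, P.pYZ c y z * log (P.pYZ c y z / (P.pY y * P.pZ c z))
      = P.pYZ c y z * log (P.pYZ c y z) - log (P.pY y) * P.pYZ c y z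
        - P.pYZ c y z * log (P.pZ c z) := by
    intro y z
    rw [log_div (pYZ_pos hP hc y z).ne' (mul_pos (pY_pos hP y) (pZ_pos hP hc z)).ne',
      log_mul (pY_pos hP y).ne' (pZ_pos hP hc z).ne']
    ring
  have hZ : ∑ y, ∑ z, P.pYZ c y z * log (P.pZ c z) = ∑ z, P.pZ c z * log (P.pZ c z) := by
    rw [sum_comm]
    simp only [← sum_mul, sum_pYZ]
  simp only [hX, hY, sum_sub_distrib, sum_mul_mul_eq_sum_pZ_mul, hZ]
  ring

theorem deltaIB_eq_sum_mul_log {P : JointDist X Y} (hP : ∀ x y, 0 < P.p x y) (β : ℝ)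
    {c : X → Z → ℝ} (hc : ∀ x z, 0 < c x z) {h : X → Z → ℝ}
    (hh : ∀ x, ∑ z, h x z = 0) :
    deltaIB P β c h = ∑ x, ∑ z, P.pX x * (h x z * (log (c x z) + 1))
      + (β - 1) * ∑ z, P.pZ h z * (log (P.pZ c z) + 1)
      - β * ∑ y, ∑ z, P.pYZ h y z * (log (P.pYZ c y z) + 1)
      + β * ∑ y, ∑ z, log (P.pY y) * P.pYZ h y z := by
  change (∑ x, ∑ z, P.pX x * h x z * log (c x z / P.pZ c z))
    - β * ∑ x, ∑ y, ∑ z, P.p x y * h x z * log (P.pYZ c y z / P.pY y / P.pZ c z) = _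
  have hX : ∀ x z, P.pX x * h x z * log (c x z / P.pZ c z)
      = P.pX x * (h x z * log (c x z)) - P.pX x * h x z * log (P.pZ c z) := by
    intro x z
    rw [log_div (hc x z).ne' (pZ_pos hP hc z).ne']
    ring
  have hY : ∀ y z, log (P.pYZ c y z / P.pY y / P.pZ c z)
      = log (P.pYZ c y z) - log (P.pY y) - log (P.pZ c z) := by
    intro y z
    rw [log_div (div_pos (pYZ_pos hP hc y z) (pY_pos hP y)).ne' (pZ_pos hP hc z).ne',
      log_div (pYZ_pos hP hc y z).ne' (pY_pos hP y).ne']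
  have hZ : ∑ y, ∑ z, P.pYZ h y z * log (P.pZ c z) = ∑ z, P.pZ h z * log (P.pZ c z) := by
    rw [sum_comm]
    simp only [← sum_mul, sum_pYZ]
  have hX0 : ∑ x, ∑ z, P.pX x * h x z = 0 := by
    simp only [← mul_sum, hh, mul_zero, sum_const_zero]
  simp only [hX, hY, sum_mul_mul_eq_sum_pZ_mul, sum_mul_mul_eq_sum_pYZ_mul, mul_sub,
    sum_sub_distrib, hZ, mul_add, mul_one, sum_add_distrib, hX0,
    sum_pZ_eq_zero P hh, sum_pYZ_eq_zero P hh, sum_const_zero,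
    mul_comm (P.pYZ h _ _) (log (P.pY _))]
  ring

theorem sum_sum_sum_mul_div_mul_eq_sum_sq_div {ι κ : Type*} [Fintype ι] [Fintype κ]
    (a g : ι → κ → ℝ) (d : κ → ℝ) :
    ∑ i, ∑ i', ∑ k, a i k * a i' k / d k * (g i k * g i' k)
      = ∑ k, (∑ i, a i k * g i k) ^ 2 / d k := by
  simp only [sq, sum_mul_sum, sum_div]
  refine (sum_congr rfl fun i _ => sum_comm).trans (sum_comm.trans ?_)
  refine sum_congr rfl fun k _ => sum_congr rfl fun i _ =>
    sum_congr rfl fun i' _ => ?_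
  ring

theorem delta2IB_eq_sum_sq_div {P : JointDist X Y} (hP : ∀ x y, 0 < P.p x y) (β : ℝ)
    (c h : X → Z → ℝ) :
    delta2IB P β c h = ∑ x, ∑ z, P.pX x * (h x z ^ 2 / (2 * c x z))
      + (β - 1) * ∑ z, P.pZ h z ^ 2 / (2 * P.pZ c z)
      - β * ∑ y, ∑ z, P.pYZ h y z ^ 2 / (2 * P.pYZ c y z) := by
  have hX : ∑ x, ∑ z, (P.pX x) ^ 2 / (P.pX x * c x z) * (h x z) ^ 2
      = ∑ x, ∑ z, P.pX x * (h x z ^ 2 / c x z) := by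
    refine sum_congr rfl fun x _ => sum_congr rfl fun z _ => ?_
    rw [sq (P.pX x), mul_div_mul_left _ _ (pX_pos hP x).ne']
    ring
  have hXX := sum_sum_sum_mul_div_mul_eq_sum_sq_div (fun x (_ : Z) => P.pX x) h (P.pZ c)
  have hYY := sum_sum_sum_mul_div_mul_eq_sum_sq_div (κ := Y × Z) (fun x yz => P.p x yz.1)
    (fun x yz => h x yz.2) (fun yz => P.pYZ c yz.1 yz.2)
  simp only [Fintype.sum_prod_type] at hYY
  change (1 / 2) * ((∑ x, ∑ z, (P.pX x) ^ 2 / (P.pX x * c x z) * (h x z) ^ 2)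
    - β * (∑ x, ∑ x', ∑ y, ∑ z, P.p x y * P.p x' y / P.pYZ c y z * (h x z * h x' z))
    + (β - 1) * (∑ x, ∑ x', ∑ z, P.pX x * P.pX x' / P.pZ c z * (h x z * h x' z))) = _
  rw [hX, hXX, hYY]
  simp only [mul_div_assoc', div_mul_eq_div_div_swap, ← sum_div, pZ, pYZ]
  ring

theorem hasSecondOrderExpansion_IBraw_add_mul {P : JointDist X Y} (hP : ∀ x y, 0 < P.p x y)
    (β : ℝ) {c : X → Z → ℝ} (hc : ∀ x z, 0 < c x z) (h : X → Z → ℝ) :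
    HasSecondOrderExpansion (fun ε => IBraw P β fun x z => c x z + ε * h x z) (IBraw P β c)
      (∑ x, ∑ z, P.pX x * (h x z * (log (c x z) + 1))
        + (β - 1) * ∑ z, P.pZ h z * (log (P.pZ c z) + 1)
        - β * ∑ y, ∑ z, P.pYZ h y z * (log (P.pYZ c y z) + 1)
        + β * ∑ y, ∑ z, log (P.pY y) * P.pYZ h y z)
      (∑ x, ∑ z, P.pX x * (h x z ^ 2 / (2 * c x z))
        + (β - 1) * ∑ z, P.pZ h z ^ 2 / (2 * P.pZ c z)
        - β * ∑ y, ∑ z, P.pYZ h y z ^ 2 / (2 * P.pYZ c y z)) := by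
  have hexp :=
    (((HasSecondOrderExpansion.sum univ fun x _ => HasSecondOrderExpansion.sum univ fun z _ =>
        (hasSecondOrderExpansion_mul_log (hc x z) (h x z)).const_mul (P.pX x)).add
      ((HasSecondOrderExpansion.sum univ fun z _ =>
        hasSecondOrderExpansion_mul_log (pZ_pos hP hc z) (P.pZ h z)).const_mul (β - 1))).sub
      ((HasSecondOrderExpansion.sum univ fun y _ => HasSecondOrderExpansion.sum univ fun z _ =>
        hasSecondOrderExpansion_mul_log (pYZ_pos hP hc y z) (P.pYZ h y z)).const_mul β)).add
      ((HasSecondOrderExpansion.sum univ fun y _ => HasSecondOrderExpansion.sum univ fun z _ =>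
        (hasSecondOrderExpansion_affine (P.pYZ c y z) (P.pYZ h y z)).const_mul
          (log (P.pY y))).const_mul β)
  simp only [mul_zero, sum_const_zero, add_zero] at hexp
  rw [← IBraw_eq_sum_mul_log hP β hc] at hexp
  refine hexp.congr ?_
  have hpos : ∀ᶠ ε in 𝓝 (0 : ℝ), ∀ x z, 0 < c x z + ε * h x z :=
    eventually_all.2 fun x => eventually_all.2 fun z => eventually_pos_add_mul (hc x z) (h x z)
  filter_upwards [hpos] with ε hε
  simp only [IBraw_eq_sum_mul_log hP β hε, pZ_add_mul, pYZ_add_mul]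

theorem IB_first_and_second_variation_general (P : JointDist X Y) (β : ℝ)
    (c : X → Z → ℝ) (hc : ∀ x z, 0 < c x z)
    (hP : ∀ x y, 0 < P.p x y)
    (h : X → Z → ℝ) (hh : ∀ x, ∑ z, h x z = 0) :
    (fun ε : ℝ =>
        IBraw P β (fun x z => c x z + ε * h x z)
          - (IBraw P β c + ε * deltaIB P β c h + ε ^ 2 * delta2IB P β c h))
      =O[nhds (0 : ℝ)] fun ε => ε ^ 3 := by
  have hexp := hasSecondOrderExpansion_IBraw_add_mul hP β hc h
  rwa [← deltaIB_eq_sum_mul_log hP β hc hh, ← delta2IB_eq_sum_sq_div hP β c h] at hexp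

/-- (First- and second-order variations of the IB objective.) For a perturbation
`h(z|x)` (with `∑ z, h(z|x) = 0`) of the encoder `p(z|x)`, the expansion
`IB_β[p(z|x) + ε·h(z|x)] = IB_β[p(z|x)] + ε·δIB_β + ε²·δ²IB_β + O(ε³)` holds as `ε → 0`,
where `δIB_β` and `δ²IB_β` are the explicit first- and second-order variation formulas above. -/
theorem IB_first_and_second_variation (P : JointDist X Y) (β : ℝ)
    (c : X → Z → ℝ) (hc : ∀ x z, 0 < c x z) (hc1 : ∀ x, ∑ z, c x z = 1)
    (hP : ∀ x y, 0 < P.p x y)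
    (h : X → Z → ℝ) (hh : ∀ x, ∑ z, h x z = 0) :
    (fun ε : ℝ =>
        IBraw P β (fun x z => c x z + ε * h x z)
          - (IBraw P β c + ε * deltaIB P β c h + ε ^ 2 * delta2IB P β c h))
      =O[nhds (0 : ℝ)] fun ε => ε ^ 3 :=
  IB_first_and_second_variation_general P β c hc hP h hh
end

section
/- (Sufficient Condition 2.) Suppose X and Y are not independent. Then a sufficient condition for (X,Y) to be IB_β-learnable is β > inf over functions h(x) of β₀[h(x)], where β₀[h(x)] = ( E_{x∼p(x)}[h(x)²] − (E_{x∼p(x)}[h(x)])² ) / ( E_{y∼p(y)}[ (E_{x∼p(x|y)}[h(x)])² ] − (E_{x∼p(x)}[h(x)])² ), the infimum being over h such that the denominator is positive. -/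
open Filter Asymptotics
open scoped BigOperators Topology

variable {X Y Z : Type} [Fintype X] [Fintype Y] [Fintype Z]

/-- The functional `β₀[h(x)] = ( E_x[h²] − (E_x[h])² ) / ( E_y[(E_{x|y}[h])²] − (E_x[h])² )`,
where `E_{x|y}[h] = (∑ x, p(x,y) h(x)) / p(y)`, so that
`E_y[(E_{x|y}[h])²] = ∑ y, (∑ x, p(x,y) h(x))² / p(y)`. -/
noncomputable def beta0Func (P : JointDist X Y) (h : X → ℝ) : ℝ :=
  ((∑ x, P.pX x * (h x) ^ 2) - (∑ x, P.pX x * h x) ^ 2) /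
    ((∑ y, (∑ x, P.p x y * h x) ^ 2 / P.pY y) - (∑ x, P.pX x * h x) ^ 2)

/- ===================== auxiliary analytic lemmas ===================== -/

private noncomputable def Lf (u : ℝ) : ℝ :=
  (1+u)*Real.log (1+u) + (1-u)*Real.log (1-u)

private lemma nonneg_of_deriv (f f' : ℝ → ℝ) (c : ℝ) (hc : 0 ≤ c)
    (hd : ∀ u ∈ Set.Icc (0:ℝ) c, HasDerivAt f (f' u) u)
    (h0 : f 0 = 0) (h' : ∀ u ∈ Set.Icc (0:ℝ) c, 0 ≤ f' u) :
    ∀ u ∈ Set.Icc (0:ℝ) c, 0 ≤ f u := by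
  intro u hu
  have mono : MonotoneOn f (Set.Icc 0 c) :=
    monotoneOn_of_deriv_nonneg (convex_Icc 0 c)
      (fun x hx => (hd x hx).continuousAt.continuousWithinAt)
      (fun x hx => (hd x (interior_subset hx)).differentiableAt.differentiableWithinAt)
      (fun x hx => by rw [(hd x (interior_subset hx)).deriv]; exact h' x (interior_subset hx))
  have := mono (Set.left_mem_Icc.2 hc) hu hu.1
  rw [h0] at this; exact this

private lemma hasDerivAt_log1p {u : ℝ} (h : (1:ℝ) + u ≠ 0) :
    HasDerivAt (fun u : ℝ => Real.log (1 + u)) (1 + u)⁻¹ u := by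
  have := (Real.hasDerivAt_log h).comp u ((hasDerivAt_id u).const_add 1)
  exact this.congr_deriv (mul_one _)

private lemma hasDerivAt_log1m {u : ℝ} (h : (1:ℝ) - u ≠ 0) :
    HasDerivAt (fun u : ℝ => Real.log (1 - u)) (-(1 - u)⁻¹) u := by
  have h2 : HasDerivAt (fun u : ℝ => 1 - u) (-1 : ℝ) u := by
    exact (hasDerivAt_id' u).const_sub 1
  have := (Real.hasDerivAt_log h).comp u h2
  refine this.congr_deriv ?_
  ring

private lemma log_diff_bounds {u : ℝ} (h0 : 0 ≤ u) (h2 : u ≤ 1/2) :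
    2*u ≤ Real.log (1+u) - Real.log (1-u) ∧
    Real.log (1+u) - Real.log (1-u) ≤ 2*u + 8*u^3 := by
  have hu1 : (0:ℝ) < 1 - u := by linarith
  have hu1' : (0:ℝ) < 1 + u := by linarith
  have Plow : ∀ u ∈ Set.Icc (0:ℝ) (1/2), 0 ≤ 1 + u - (1-u) * Real.exp (2*u) := by
    apply nonneg_of_deriv _ (fun u => 1 - (1 - 2*u) * Real.exp (2*u))
    · norm_num
    · intro u hu
      have he : HasDerivAt (fun u : ℝ => Real.exp (2*u)) (2 * Real.exp (2*u)) u := by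
        have := (Real.hasDerivAt_exp (2*u)).comp u ((hasDerivAt_id u).const_mul 2)
        simpa [Function.comp_def, mul_comm] using this
      have h1 : HasDerivAt (fun u : ℝ => (1-u) * Real.exp (2*u))
          ((-1) * Real.exp (2*u) + (1-u) * (2 * Real.exp (2*u))) u :=
        (((hasDerivAt_id u).neg.const_add 1).mul he)
      have := ((hasDerivAt_id u).const_add 1).sub h1
      refine this.congr_deriv ?_
      ring
    · simp
    · intro u hu
      have hinv : Real.exp (-(2*u)) * Real.exp (2*u) = 1 := by
        rw [← Real.exp_add]; simp
      nlinarith [Real.exp_pos (2*u), Real.add_one_le_exp (-(2*u)), hinv]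
  have hlow : (1-u) * Real.exp (2*u) ≤ 1 + u := by
    have := Plow u ⟨h0, h2⟩; linarith
  have Pup : ∀ u ∈ Set.Icc (0:ℝ) (1/2), 0 ≤ (1-u) * Real.exp (2*u + 8*u^3) - (1 + u) := by
    apply nonneg_of_deriv _
      (fun u => Real.exp (2*u + 8*u^3) * (1 - 2*u + 24*u^2 - 24*u^3) - 1)
    · norm_num
    · intro u hu
      have hw : HasDerivAt (fun u : ℝ => 2*u + 8*u^3) (2 + 8*(3*u^2)) u := by
        have h1 : HasDerivAt (fun u : ℝ => 2*u) (2:ℝ) u := by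
          simpa using (hasDerivAt_id u).const_mul 2
        have h2 : HasDerivAt (fun u : ℝ => u^3) (3*u^2) u := by
          simpa using hasDerivAt_pow 3 u
        exact h1.add (h2.const_mul 8)
      have he : HasDerivAt (fun u : ℝ => Real.exp (2*u + 8*u^3))
          (Real.exp (2*u + 8*u^3) * (2 + 8*(3*u^2))) u := by
        have := (Real.hasDerivAt_exp (2*u + 8*u^3)).comp u hw
        simpa [Function.comp_def, mul_comm] using this
      have h1 : HasDerivAt (fun u : ℝ => (1-u) * Real.exp (2*u + 8*u^3))
          ((-1) * Real.exp (2*u + 8*u^3) + (1-u) * (Real.exp (2*u + 8*u^3) * (2 + 8*(3*u^2)))) u :=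
        (((hasDerivAt_id u).neg.const_add 1).mul he)
      have := h1.sub ((hasDerivAt_id u).const_add 1)
      refine this.congr_deriv ?_
      ring
    · simp
    · intro u hu
      obtain ⟨hu0, hu2⟩ := hu
      set w := 2*u + 8*u^3 with hwdef
      have hw0 : 0 ≤ w := by positivity
      have hA : (0:ℝ) ≤ 1 - 2*u + 24*u^2 - 24*u^3 := by nlinarith
      have hew : 1 + w ≤ Real.exp w := by linarith [Real.add_one_le_exp w]
      have key : 1 ≤ (1 + w) * (1 - 2*u + 24*u^2 - 24*u^3) := by
        rw [hwdef]
        nlinarith [mul_nonneg (pow_nonneg hu0 3) (by linarith : (0:ℝ) ≤ 1 - 2*u),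
          mul_nonneg (pow_nonneg hu0 5) (by linarith : (0:ℝ) ≤ 1 - u), sq_nonneg u]
      nlinarith [Real.exp_pos w]
  have hup : 1 + u ≤ (1-u) * Real.exp (2*u + 8*u^3) := by
    have := Pup u ⟨h0, h2⟩; linarith
  constructor
  · have := Real.log_le_log (by positivity) hlow
    rw [Real.log_mul (ne_of_gt hu1) (ne_of_gt (Real.exp_pos _)), Real.log_exp] at this
    linarith
  · have := Real.log_le_log (by positivity) hup
    rw [Real.log_mul (ne_of_gt hu1) (ne_of_gt (Real.exp_pos _)), Real.log_exp] at this
    linarith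

private lemma L_bounds_nn {u : ℝ} (h0 : 0 ≤ u) (h2 : u ≤ 1/2) :
    u^2 ≤ (1+u)*Real.log (1+u) + (1-u)*Real.log (1-u) ∧
    (1+u)*Real.log (1+u) + (1-u)*Real.log (1-u) ≤ u^2 + 2*u^4 := by
  have hL : ∀ u ∈ Set.Icc (0:ℝ) (1/2),
      HasDerivAt (fun u : ℝ => (1+u)*Real.log (1+u) + (1-u)*Real.log (1-u))
        (Real.log (1+u) - Real.log (1-u)) u := by
    intro u hu
    obtain ⟨hu0, hu2⟩ := hu
    have hp : (1:ℝ) + u ≠ 0 := by linarith [hu0]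
    have hm : (1:ℝ) - u ≠ 0 := by intro hc; rw [sub_eq_zero] at hc; linarith
    have h1 : HasDerivAt (fun u : ℝ => (1+u)*Real.log (1+u))
        (1 * Real.log (1+u) + (1+u) * (1+u)⁻¹) u :=
      ((hasDerivAt_id u).const_add 1).mul (hasDerivAt_log1p hp)
    have h2' : HasDerivAt (fun u : ℝ => (1-u)*Real.log (1-u))
        ((-1) * Real.log (1-u) + (1-u) * (-(1-u)⁻¹)) u := by
      have hi : HasDerivAt (fun u : ℝ => 1 - u) (-1 : ℝ) u := by
        exact (hasDerivAt_id' u).const_sub 1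
      exact hi.mul (hasDerivAt_log1m hm)
    have := h1.add h2'
    refine this.congr_deriv ?_
    rw [mul_neg, mul_inv_cancel₀ hp, mul_inv_cancel₀ hm]
    ring
  constructor
  · have key : ∀ u ∈ Set.Icc (0:ℝ) (1/2),
        0 ≤ (1+u)*Real.log (1+u) + (1-u)*Real.log (1-u) - u^2 := by
      apply nonneg_of_deriv _ (fun u => Real.log (1+u) - Real.log (1-u) - 2*u)
      · norm_num
      · intro u hu
        have := (hL u hu).sub (by simpa using (hasDerivAt_pow 2 u) :
          HasDerivAt (fun u : ℝ => u^2) (2*u) u)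
        exact this
      · norm_num
      · intro u hu
        have := (log_diff_bounds hu.1 hu.2).1
        linarith
    have := key u ⟨h0, h2⟩; linarith
  · have key : ∀ u ∈ Set.Icc (0:ℝ) (1/2),
        0 ≤ u^2 + 2*u^4 - ((1+u)*Real.log (1+u) + (1-u)*Real.log (1-u)) := by
      apply nonneg_of_deriv _
        (fun u => 2*u + 8*u^3 - (Real.log (1+u) - Real.log (1-u)))
      · norm_num
      · intro u hu
        have hp : HasDerivAt (fun u : ℝ => u^2 + 2*u^4) (2*u + 2*(4*u^3)) u := by
          have a1 : HasDerivAt (fun u : ℝ => u^2) (2*u) u := by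
            simpa using hasDerivAt_pow 2 u
          have a2 : HasDerivAt (fun u : ℝ => u^4) (4*u^3) u := by
            simpa using hasDerivAt_pow 4 u
          exact a1.add (a2.const_mul 2)
        have := hp.sub (hL u hu)
        refine this.congr_deriv ?_
        ring
      · norm_num
      · intro u hu
        have := (log_diff_bounds hu.1 hu.2).2
        linarith
    have := key u ⟨h0, h2⟩; linarith

private lemma L_lower {u : ℝ} (hu : |u| ≤ 1/2) : u^2 ≤ Lf u := by
  unfold Lf
  rcases le_total 0 u with h | h
  · exact (L_bounds_nn h (by rwa [abs_of_nonneg h] at hu)).1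
  · have h0 : 0 ≤ -u := by linarith
    have h2 : -u ≤ 1/2 := by rwa [abs_of_nonpos h] at hu
    have := (L_bounds_nn h0 h2).1
    have e1 : (1:ℝ) + -u = 1 - u := by ring
    have e2 : (1:ℝ) - -u = 1 + u := by ring
    rw [e1, e2] at this
    nlinarith [this]

private lemma L_upper {u : ℝ} (hu : |u| ≤ 1/2) : Lf u ≤ u^2 + 2*u^4 := by
  unfold Lf
  rcases le_total 0 u with h | h
  · exact (L_bounds_nn h (by rwa [abs_of_nonneg h] at hu)).2
  · have h0 : 0 ≤ -u := by linarith
    have h2 : -u ≤ 1/2 := by rwa [abs_of_nonpos h] at hu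
    have := (L_bounds_nn h0 h2).2
    have e1 : (1:ℝ) + -u = 1 - u := by ring
    have e2 : (1:ℝ) - -u = 1 + u := by ring
    rw [e1, e2] at this
    nlinarith [this]

/- ===================== IB formula for perturbed encoder ===================== -/

private lemma main_calc (P : JointDist X Y) (hYpos : ∀ y, 0 < P.pY y) (β : ℝ)
    (s : X → ℝ) (hsum : ∑ x, P.pX x * s x = 0)
    (e : Encoder X (Fin 2))
    (hec0 : ∀ x, e.c x 0 = (1 + s x)/2) (hec1 : ∀ x, e.c x 1 = (1 - s x)/2) :
    IB P β e = (∑ x, P.pX x * Lf (s x)) / 2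
      - β * ((∑ y, P.pY y * Lf ((∑ x, P.p x y * s x) / P.pY y)) / 2) := by
  have sumpX : ∑ x, P.pX x = 1 := P.sum_one
  have pXnn : ∀ x, 0 ≤ P.pX x := fun x => Finset.sum_nonneg fun y _ => P.nonneg x y
  have hq0 : (∑ x', P.pX x' * e.c x' 0) = 1/2 := by
    have e1 : ∀ x ∈ Finset.univ, P.pX x * e.c x 0 = P.pX x/2 + (P.pX x * s x)/2 := by
      intro x _; rw [hec0 x]; ring
    rw [Finset.sum_congr rfl e1, Finset.sum_add_distrib, ← Finset.sum_div, ← Finset.sum_div,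
        sumpX, hsum]
    norm_num
  have hq1 : (∑ x', P.pX x' * e.c x' 1) = 1/2 := by
    have e1 : ∀ x ∈ Finset.univ, P.pX x * e.c x 1 = P.pX x/2 - (P.pX x * s x)/2 := by
      intro x _; rw [hec1 x]; ring
    rw [Finset.sum_congr rfl e1, Finset.sum_sub_distrib, ← Finset.sum_div, ← Finset.sum_div,
        sumpX, hsum]
    norm_num
  have hIXZ : IXZ P e = (∑ x, P.pX x * Lf (s x)) / 2 := by
    unfold IXZ
    rw [Finset.sum_div]
    apply Finset.sum_congr rfl
    intro x _
    rw [Fin.sum_univ_two, hq0, hq1, hec0 x, hec1 x]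
    rcases eq_or_lt_of_le (pXnn x) with h0 | hp
    · rw [← h0]; simp
    · have hne := ne_of_gt hp
      have a0 : P.pX x * ((1 + s x)/2) / (P.pX x * (1/2)) = 1 + s x := by
        rw [mul_div_mul_left _ _ hne]; ring
      have a1 : P.pX x * ((1 - s x)/2) / (P.pX x * (1/2)) = 1 - s x := by
        rw [mul_div_mul_left _ _ hne]; ring
      rw [a0, a1]
      simp only [Lf]; ring
  have hIYZ : IYZ P e = (∑ y, P.pY y * Lf ((∑ x, P.p x y * s x) / P.pY y)) / 2 := by
    unfold IYZ
    rw [Finset.sum_div]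
    apply Finset.sum_congr rfl
    intro y _
    rw [Fin.sum_univ_two, hq0, hq1]
    have hpy := hYpos y
    have hne := ne_of_gt hpy
    set u := (∑ x, P.p x y * s x) / P.pY y with hu
    have hBu : (∑ x, P.p x y * s x) = P.pY y * u := by rw [hu]; field_simp
    have hpy' : (∑ x, P.p x y) = P.pY y := rfl
    have r0 : (∑ x, P.p x y * e.c x 0) = P.pY y * ((1 + u)/2) := by
      have e1 : ∀ x ∈ Finset.univ, P.p x y * e.c x 0 = P.p x y/2 + (P.p x y * s x)/2 := by
        intro x _; rw [hec0 x]; ring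
      rw [Finset.sum_congr rfl e1, Finset.sum_add_distrib, ← Finset.sum_div, ← Finset.sum_div,
          hBu, hpy']
      ring
    have r1 : (∑ x, P.p x y * e.c x 1) = P.pY y * ((1 - u)/2) := by
      have e1 : ∀ x ∈ Finset.univ, P.p x y * e.c x 1 = P.p x y/2 - (P.p x y * s x)/2 := by
        intro x _; rw [hec1 x]; ring
      rw [Finset.sum_congr rfl e1, Finset.sum_sub_distrib, ← Finset.sum_div, ← Finset.sum_div,
          hBu, hpy']
      ring
    rw [r0, r1]
    have a0 : P.pY y * ((1 + u)/2) / (P.pY y * (1/2)) = 1 + u := by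
      rw [mul_div_mul_left _ _ hne]; ring
    have a1 : P.pY y * ((1 - u)/2) / (P.pY y * (1/2)) = 1 - u := by
      rw [mul_div_mul_left _ _ hne]; ring
    rw [a0, a1]
    simp only [Lf]; ring
  unfold IB
  rw [hIXZ, hIYZ]

set_option maxHeartbeats 1000000 in
/-- (Sufficient Condition 2.) Suppose `X` and `Y` are not independent. Then a
sufficient condition for `(X,Y)` to be `IB_β`-learnable is
`β > inf_{h(x)} β₀[h(x)]`, the infimum ranging over functions `h` whose denominator
`E_y[(E_{x|y}[h])²] − (E_x[h])²` is positive. -/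
theorem IBLearnable_of_beta_gt_inf_beta0Func (P : JointDist X Y)
    (hY : ∀ y, 0 < P.pY y)
    (hdep : ¬ ∀ x y, P.p x y = P.pX x * P.pY y)
    (β : ℝ)
    (hβ : sInf {r : ℝ | ∃ h : X → ℝ,
        (∑ x, P.pX x * h x) ^ 2 < (∑ y, (∑ x, P.p x y * h x) ^ 2 / P.pY y) ∧
        r = beta0Func P h} < β) :
    IBLearnable P β := by
  classical
  have sumpX : ∑ x, P.pX x = 1 := P.sum_one
  have sumpY : ∑ y, P.pY y = 1 := by
    unfold JointDist.pY
    rw [Finset.sum_comm]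
    exact P.sum_one
  have pXnn : ∀ x, 0 ≤ P.pX x := fun x => Finset.sum_nonneg fun y _ => P.nonneg x y
  -- Step 1: the set is nonempty
  push_neg at hdep
  obtain ⟨x₀, y₀, hxy⟩ := hdep
  set h₀ : X → ℝ := fun x => if x = x₀ then (1:ℝ) else 0 with hh₀
  have hsum0 : ∑ x, P.pX x * h₀ x = P.pX x₀ := by simp [hh₀]
  have hsum0y : ∀ y, (∑ x, P.p x y * h₀ x) = P.p x₀ y := by intro y; simp [hh₀]
  have hTpos : 0 < ∑ y, P.pY y * (P.p x₀ y / P.pY y - P.pX x₀)^2 := by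
    apply Finset.sum_pos' (fun y _ => mul_nonneg (hY y).le (sq_nonneg _))
    refine ⟨y₀, Finset.mem_univ _, ?_⟩
    apply mul_pos (hY y₀)
    have hne : P.p x₀ y₀ / P.pY y₀ - P.pX x₀ ≠ 0 := by
      intro hc
      rw [sub_eq_zero] at hc
      exact hxy ((div_eq_iff (hY y₀).ne').mp hc)
    exact lt_of_le_of_ne (sq_nonneg _) (Ne.symm (pow_ne_zero 2 hne))
  have key : (P.pX x₀)^2 < ∑ y, (P.p x₀ y)^2 / P.pY y := by
    have expand : ∀ y ∈ Finset.univ, (P.p x₀ y)^2 / P.pY y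
        = P.pY y * (P.p x₀ y / P.pY y - P.pX x₀)^2
          + (2*P.pX x₀) * P.p x₀ y - (P.pX x₀)^2 * P.pY y := by
      intro y _
      have h1 := (hY y).ne'
      field_simp
      ring
    have hsx : (∑ y, P.p x₀ y) = P.pX x₀ := rfl
    calc (P.pX x₀)^2
        < (∑ y, P.pY y * (P.p x₀ y / P.pY y - P.pX x₀)^2) + (P.pX x₀)^2 := by
          linarith [hTpos]
      _ = ∑ y, (P.p x₀ y)^2 / P.pY y := by
          rw [Finset.sum_congr rfl expand, Finset.sum_sub_distrib, Finset.sum_add_distrib,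
              ← Finset.mul_sum, ← Finset.mul_sum, hsx, sumpY]
          ring
  have hSne : {r : ℝ | ∃ h : X → ℝ,
      (∑ x, P.pX x * h x) ^ 2 < (∑ y, (∑ x, P.p x y * h x) ^ 2 / P.pY y) ∧
      r = beta0Func P h}.Nonempty := by
    refine ⟨beta0Func P h₀, h₀, ?_, rfl⟩
    simp only [hsum0, hsum0y]
    exact key
  -- Step 2: get h with β₀[h] < β
  obtain ⟨r, ⟨h, hd, rfl⟩, hrβ⟩ := exists_lt_of_csInf_lt hSne hβ
  -- Step 3: centered function and variance quantities
  set m := ∑ x, P.pX x * h x with hm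
  set g : X → ℝ := fun x => h x - m with hg
  set V := ∑ x, P.pX x * (g x)^2 with hV
  set Bf : Y → ℝ := fun y => ∑ x, P.p x y * g x with hBf
  set D := ∑ y, (Bf y)^2 / P.pY y with hD
  set M := ∑ x, P.pX x * (g x)^4 with hM
  have sum_g : ∑ x, P.pX x * g x = 0 := by
    have e1 : ∀ x ∈ Finset.univ, P.pX x * g x = P.pX x * h x - m * P.pX x := by
      intro x _; rw [hg]; ring
    rw [Finset.sum_congr rfl e1, Finset.sum_sub_distrib, ← Finset.mul_sum, sumpX, ← hm]
    ring
  have sumB : ∑ y, Bf y = 0 := by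
    rw [hBf, Finset.sum_comm]
    calc ∑ x, ∑ y, P.p x y * g x = ∑ x, P.pX x * g x := by
          apply Finset.sum_congr rfl
          intro x _
          rw [← Finset.sum_mul]
          rfl
      _ = 0 := sum_g
  have idnum : (∑ x, P.pX x * (h x) ^ 2) - m ^ 2 = V := by
    have e1 : ∀ x ∈ Finset.univ, P.pX x * (g x)^2
        = P.pX x * (h x)^2 - (2*m) * (P.pX x * h x) + m^2 * P.pX x := by
      intro x _; rw [hg]; ring
    rw [hV, Finset.sum_congr rfl e1, Finset.sum_add_distrib, Finset.sum_sub_distrib,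
        ← Finset.mul_sum, ← Finset.mul_sum, sumpX, ← hm]
    ring
  have hBh : ∀ y, (∑ x, P.p x y * h x) = Bf y + m * P.pY y := by
    intro y
    have e1 : ∀ x ∈ Finset.univ, P.p x y * h x = P.p x y * g x + m * P.p x y := by
      intro x _; rw [hg]; ring
    rw [Finset.sum_congr rfl e1, Finset.sum_add_distrib, ← Finset.mul_sum, hBf]
    rfl
  have idden : (∑ y, (∑ x, P.p x y * h x) ^ 2 / P.pY y) - m ^ 2 = D := by
    have e1 : ∀ y ∈ Finset.univ, (∑ x, P.p x y * h x)^2 / P.pY y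
        = (Bf y)^2 / P.pY y + (2*m) * Bf y + m^2 * P.pY y := by
      intro y _
      rw [hBh y]
      have := (hY y).ne'
      field_simp
      ring
    rw [Finset.sum_congr rfl e1, Finset.sum_add_distrib, Finset.sum_add_distrib,
        ← Finset.mul_sum, ← Finset.mul_sum, sumB, sumpY, hD]
    ring
  have hDpos : 0 < D := by
    linarith [idden, hd]
  have hbv : beta0Func P h = V / D := by
    unfold beta0Func
    rw [← hm, idnum, idden]
  have hV0 : 0 ≤ V := by
    rw [hV]
    exact Finset.sum_nonneg fun x _ => mul_nonneg (pXnn x) (sq_nonneg _)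
  have hVβD : V < β * D := by
    rw [hbv] at hrβ
    exact (div_lt_iff₀ hDpos).mp hrβ
  have hβ0 : 0 < β := by
    rcases lt_or_ge 0 β with hb | hb
    · exact hb
    · nlinarith
  have hM0 : 0 ≤ M := by
    rw [hM]
    exact Finset.sum_nonneg fun x _ => mul_nonneg (pXnn x) (by positivity)
  -- Step 4: bounds on g
  set K := 1 + ∑ x, |g x| with hK
  have hK1 : 1 ≤ K := by
    rw [hK]
    have : 0 ≤ ∑ x, |g x| := Finset.sum_nonneg fun x _ => abs_nonneg _
    linarith
  have hK0 : 0 < K := by linarith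
  have hgK : ∀ x, |g x| ≤ K := by
    intro x
    have := Finset.single_le_sum (f := fun x => |g x|) (fun i _ => abs_nonneg _)
      (Finset.mem_univ x)
    rw [hK]; linarith
  have hBK : ∀ y, |Bf y| ≤ K * P.pY y := by
    intro y
    calc |Bf y| ≤ ∑ x, |P.p x y * g x| := by rw [hBf]; exact Finset.abs_sum_le_sum_abs _ _
      _ ≤ ∑ x, P.p x y * K := by
          apply Finset.sum_le_sum
          intro x _
          rw [abs_mul, abs_of_nonneg (P.nonneg x y)]
          exact mul_le_mul_of_nonneg_left (hgK x) (P.nonneg x y)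
      _ = K * P.pY y := by
          rw [← Finset.sum_mul, mul_comm]
          rfl
  -- Step 5: choice of t
  have hgap : 0 < β * D - V := by linarith
  set t := min (1/(2*K)) (Real.sqrt ((β*D - V)/(2*M+1))) with ht
  have ht0 : 0 < t := by
    apply lt_min (by positivity)
    apply Real.sqrt_pos.mpr
    positivity
  have htK : t * K ≤ 1/2 := by
    calc t * K ≤ (1/(2*K)) * K := mul_le_mul_of_nonneg_right (min_le_left _ _) hK0.le
      _ = 1/2 := by field_simp
  have ht2 : t^2 * (2*M+1) ≤ β*D - V := by
    have h1 : t ≤ Real.sqrt ((β*D - V)/(2*M+1)) := min_le_right _ _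
    have h2 : t^2 ≤ (β*D - V)/(2*M+1) := by
      calc t^2 ≤ (Real.sqrt ((β*D - V)/(2*M+1)))^2 := by
            apply pow_le_pow_left₀ ht0.le h1
        _ = (β*D - V)/(2*M+1) := Real.sq_sqrt (by positivity)
    rw [← le_div_iff₀ (by positivity : (0:ℝ) < 2*M+1)]
    exact h2
  clear_value t
  set s : X → ℝ := fun x => t * g x with hs
  have hsb : ∀ x, |s x| ≤ 1/2 := by
    intro x
    rw [hs]
    calc |t * g x| = t * |g x| := by rw [abs_mul, abs_of_nonneg ht0.le]
      _ ≤ t * K := mul_le_mul_of_nonneg_left (hgK x) ht0.le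
      _ ≤ 1/2 := htK
  have hssum : ∑ x, P.pX x * s x = 0 := by
    have e1 : ∀ x ∈ Finset.univ, P.pX x * s x = t * (P.pX x * g x) := by
      intro x _; rw [hs]; ring
    rw [Finset.sum_congr rfl e1, ← Finset.mul_sum, sum_g, mul_zero]
  -- Step 6: the encoder
  have hnn : ∀ (x : X) (z : Fin 2), 0 ≤ (if z = (0:Fin 2) then (1 + s x)/2 else (1 - s x)/2) := by
    intro x z
    have := abs_le.mp (hsb x)
    split <;> linarith [this.1, this.2]
  have hsone : ∀ x : X, (∑ z : Fin 2, (if z = (0:Fin 2) then (1 + s x)/2 else (1 - s x)/2)) = 1 := by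
    intro x
    rw [Fin.sum_univ_two, if_pos rfl, if_neg (by decide : ¬ ((1:Fin 2) = 0))]
    ring
  refine ⟨2, ⟨fun x z => if z = (0:Fin 2) then (1 + s x)/2 else (1 - s x)/2, hnn, hsone⟩, ?_⟩
  set e : Encoder X (Fin 2) :=
    ⟨fun x z => if z = (0:Fin 2) then (1 + s x)/2 else (1 - s x)/2, hnn, hsone⟩ with he
  have hec0 : ∀ x, e.c x 0 = (1 + s x)/2 := by
    intro x; rw [he]
    show (if (0:Fin 2) = 0 then (1 + s x)/2 else (1 - s x)/2) = (1 + s x)/2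
    exact if_pos rfl
  have hec1 : ∀ x, e.c x 1 = (1 - s x)/2 := by
    intro x; rw [he]
    show (if (1:Fin 2) = 0 then (1 + s x)/2 else (1 - s x)/2) = (1 - s x)/2
    exact if_neg (by decide : ¬ ((1:Fin 2) = 0))
  have hform := main_calc P hY β s hssum e hec0 hec1
  -- bound IXZ part
  have hXb : (∑ x, P.pX x * Lf (s x)) ≤ t^2 * V + 2 * t^4 * M := by
    calc ∑ x, P.pX x * Lf (s x)
        ≤ ∑ x, P.pX x * ((s x)^2 + 2*(s x)^4) :=
          Finset.sum_le_sum (fun x _ => mul_le_mul_of_nonneg_left (L_upper (hsb x)) (pXnn x))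
      _ = t^2 * V + 2*t^4*M := by
          rw [hV, hM, Finset.mul_sum, Finset.mul_sum, ← Finset.sum_add_distrib]
          apply Finset.sum_congr rfl
          intro x _
          rw [hs]
          ring
  -- bound IYZ part
  have hsB : ∀ y, (∑ x, P.p x y * s x) = t * Bf y := by
    intro y
    have e1 : ∀ x ∈ Finset.univ, P.p x y * s x = t * (P.p x y * g x) := by
      intro x _; rw [hs]; ring
    rw [Finset.sum_congr rfl e1, ← Finset.mul_sum, hBf]
  have habs : ∀ y, |t * Bf y / P.pY y| ≤ 1/2 := by
    intro y
    rw [abs_div, abs_of_pos (hY y), abs_mul, abs_of_nonneg ht0.le, div_le_iff₀ (hY y)]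
    calc t * |Bf y| ≤ t * (K * P.pY y) := mul_le_mul_of_nonneg_left (hBK y) ht0.le
      _ = t * K * P.pY y := by ring
      _ ≤ 1/2 * P.pY y := mul_le_mul_of_nonneg_right htK (hY y).le
  have hYb : t^2 * D ≤ ∑ y, P.pY y * Lf ((∑ x, P.p x y * s x) / P.pY y) := by
    have step : ∀ y ∈ Finset.univ,
        t^2 * ((Bf y)^2 / P.pY y) ≤ P.pY y * Lf ((∑ x, P.p x y * s x) / P.pY y) := by
      intro y _
      rw [hsB y]
      have hl := L_lower (habs y)
      have h2 : P.pY y * (t * Bf y / P.pY y)^2 ≤ P.pY y * Lf (t * Bf y / P.pY y) :=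
        mul_le_mul_of_nonneg_left hl (hY y).le
      calc t^2 * ((Bf y)^2 / P.pY y) = P.pY y * (t * Bf y / P.pY y)^2 := by
            have := (hY y).ne'
            field_simp
        _ ≤ _ := h2
    calc t^2 * D = ∑ y, t^2 * ((Bf y)^2 / P.pY y) := by rw [hD, Finset.mul_sum]
      _ ≤ _ := Finset.sum_le_sum step
  -- conclude
  rw [hform]
  have hfin : t^2*V + 2*t^4*M - β*(t^2*D) < 0 := by
    have key2 : t^2 * (t^2 * (2*M+1)) ≤ t^2 * (β*D - V) :=
      mul_le_mul_of_nonneg_left ht2 (sq_nonneg t)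
    linarith [pow_pos ht0 4, key2]
  have h1 : (∑ x, P.pX x * Lf (s x)) / 2 ≤ (t^2 * V + 2 * t^4 * M)/2 := by linarith
  have h2 : β * (t^2 * D) / 2 ≤ β * ((∑ y, P.pY y * Lf ((∑ x, P.p x y * s x) / P.pY y)) / 2) := by
    have := mul_le_mul_of_nonneg_left hYb hβ0.le
    linarith
  linarith
end
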